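/- arXiv:2504.15898 — 5 statements merged into one kernel-verified Lean document; each statement's English description precedes it below -/
import Mathlib

section
/- Let β ∈ (0, 2]. Then for all x, z ∈ ℝ^d, V_β(x + z) − V_β(x) − ⟨∇V_β(x), z⟩ ≤ (β/2) |z|², where ∇V_β(x) = β (1 + |x|²)^{(β−2)/2} x. -/
open Real
open scoped RealInnerProductSpace

lemma aux_rpow_taylor {a b p : ℝ} (ha : 0 < a) (hb : 0 ≤ b) (hp0 : 0 ≤ p) (hp1 : p ≤ 1) :
    b ^ p ≤ a ^ p + p * a ^ (p - 1) * (b - a) := by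
  have hs : -1 ≤ b / a - 1 := by
    have : 0 ≤ b / a := div_nonneg hb ha.le
    linarith
  have h := rpow_one_add_le_one_add_mul_self hs hp0 hp1
  have h1 : (1 : ℝ) + (b / a - 1) = b / a := by ring
  rw [h1] at h
  have h2 : (b / a) ^ p = b ^ p / a ^ p := Real.div_rpow hb ha.le p
  rw [h2] at h
  have hap : 0 < a ^ p := Real.rpow_pos_of_pos ha p
  have h3 : b ^ p ≤ a ^ p * (1 + p * (b / a - 1)) := by
    calc b ^ p = a ^ p * (b ^ p / a ^ p) := by field_simp
    _ ≤ a ^ p * (1 + p * (b / a - 1)) := by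
        exact mul_le_mul_of_nonneg_left h hap.le
  refine h3.trans_eq ?_
  have h4 : a ^ (p - 1) = a ^ p / a := by
    rw [Real.rpow_sub ha, Real.rpow_one]
  rw [h4]
  field_simp

/-- For `β ∈ (0,2]` and all `x, z ∈ ℝ^d`,
`V_β(x+z) − V_β(x) − ⟨∇V_β(x), z⟩ ≤ (β/2) |z|²`,
where `V_β(x) = (1+|x|²)^{β/2}` and `∇V_β(x) = β (1+|x|²)^{(β−2)/2} x`. -/
theorem stmt1 {d : ℕ} (β : ℝ) (hβ0 : 0 < β) (hβ2 : β ≤ 2)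
    (x z : EuclideanSpace ℝ (Fin d)) :
    (1 + ‖x + z‖ ^ 2) ^ (β / 2) - (1 + ‖x‖ ^ 2) ^ (β / 2)
        - ⟪(β * (1 + ‖x‖ ^ 2) ^ ((β - 2) / 2)) • x, z⟫
      ≤ (β / 2) * ‖z‖ ^ 2 := by
  set a : ℝ := 1 + ‖x‖ ^ 2 with ha_def
  have ha1 : (1 : ℝ) ≤ a := by nlinarith [sq_nonneg ‖x‖]
  have ha : 0 < a := by positivity
  have hb : (0 : ℝ) ≤ 1 + ‖x + z‖ ^ 2 := by positivity
  have hexp : β / 2 - 1 = (β - 2) / 2 := by ring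
  have key := aux_rpow_taylor (p := β / 2) ha hb (by linarith) (by linarith)
  rw [hexp] at key
  have hns : ‖x + z‖ ^ 2 = ‖x‖ ^ 2 + 2 * ⟪x, z⟫ + ‖z‖ ^ 2 := by
    exact norm_add_sq_real x z
  have hdiff : (1 + ‖x + z‖ ^ 2) - a = 2 * ⟪x, z⟫ + ‖z‖ ^ 2 := by
    rw [hns, ha_def]; ring
  rw [hdiff] at key
  rw [real_inner_smul_left]
  have hle1 : a ^ ((β - 2) / 2) ≤ 1 :=
    Real.rpow_le_one_of_one_le_of_nonpos ha1 (by linarith)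
  have hpos : 0 < a ^ ((β - 2) / 2) := Real.rpow_pos_of_pos ha _
  nlinarith [sq_nonneg ‖z‖, mul_le_mul_of_nonneg_left hle1 (by positivity : (0:ℝ) ≤ β / 2 * ‖z‖^2)]
end

section
/- Let d ≥ 1, λ, κ, ε > 0, β ∈ (1, 2), y₁, y₂ ∈ ℝ^d, and let μ be a probability measure on ℝ^d with finite first moment. Define b(x, μ) := −(λ/2)((x − y₁)|x − y₂|² + (x − y₂)|x − y₁|²) − κ (x − ∫_{ℝ^d} z μ(dz)). Then for every y ∈ {y₁, y₂} and every x ∈ ℝ^d, writing u := |x − y| and D := |y₁ − y₂|, one has β (ε + u²)^{(β−2)/2} ⟨x − y, b(x, μ)⟩ ≤ −λβ ( u^{β+2} − (3/2) u^{β+1} D + ((1/2) D² + κ/λ − ε) u^β − ((1/2) D² + κ/λ) ε^{β/2} − (κ/λ) u^{β−1} ∫_{ℝ^d} |z − y| μ(dz) ). -/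
open Real MeasureTheory
open scoped RealInnerProductSpace

set_option maxHeartbeats 1000000

private theorem real_ineq (lam r ε β u D M : ℝ)
    (hlam : 0 < lam) (hr : 0 < r) (hε : 0 < ε) (hβ1 : 1 < β) (hβ2 : β < 2)
    (hu : 0 ≤ u) (hD : 0 ≤ D) (hM : 0 ≤ M) :
    β * (ε + u ^ 2) ^ ((β - 2) / 2) *
      (-lam * u ^ 4 + (3 / 2) * lam * u ^ 3 * D - (lam / 2) * D ^ 2 * u ^ 2
        - lam * r * u ^ 2 + lam * r * u * M)
      ≤ -(lam * β) * (u ^ (β + 2) - (3 / 2) * u ^ (β + 1) * D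
          + ((1 / 2) * D ^ 2 + r - ε) * u ^ β
          - ((1 / 2) * D ^ 2 + r) * ε ^ (β / 2)
          - r * u ^ (β - 1) * M) := by
  have hεu : (0:ℝ) < ε + u ^ 2 := by positivity
  set c := (ε + u ^ 2) ^ ((β - 2) / 2) with hc
  have hcpos : 0 < c := Real.rpow_pos_of_pos hεu _
  have hgen : ∀ n : ℕ, 1 ≤ n → c * u ^ n ≤ u ^ (β - 2 + n) := by
    intro n hn
    have hn' : (1:ℝ) ≤ (n:ℝ) := by exact_mod_cast hn
    have hexp : 0 < β - 2 + n := by linarith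
    rcases hu.eq_or_lt with h0 | h0
    · rw [← h0, zero_pow (by omega : n ≠ 0), Real.zero_rpow hexp.ne']
      simp
    · have hcu : c ≤ u ^ (β - 2) := by
        have h2 : ((u ^ 2 : ℝ)) ^ ((β - 2) / 2) = u ^ (β - 2) := by
          rw [← Real.rpow_natCast u 2, ← Real.rpow_mul hu]
          congr 1
          push_cast
          ring
        rw [hc, ← h2]
        exact Real.rpow_le_rpow_of_nonpos (by positivity) (by linarith) (by linarith)
      calc c * u ^ n ≤ u ^ (β - 2) * u ^ n :=
            mul_le_mul_of_nonneg_right hcu (pow_nonneg hu n)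
        _ = u ^ (β - 2 + n) := by
            rw [← Real.rpow_natCast u n, ← Real.rpow_add h0]
  have hkey : c * (ε + u ^ 2) = (ε + u ^ 2) ^ (β / 2) := by
    have e : β / 2 = (β - 2) / 2 + 1 := by ring
    rw [e, Real.rpow_add_one hεu.ne']
  have hAβ : u ^ β ≤ (ε + u ^ 2) ^ (β / 2) := by
    have e : ((u ^ 2 : ℝ)) ^ (β / 2) = u ^ β := by
      rw [← Real.rpow_natCast u 2, ← Real.rpow_mul hu]
      congr 1
      push_cast
      ring
    rw [← e]
    exact Real.rpow_le_rpow (by positivity) (by linarith) (by linarith)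
  have hu2β : c * u ^ 2 ≤ u ^ β := by
    have h := hgen 2 (by norm_num)
    have e : β - 2 + ((2:ℕ):ℝ) = β := by push_cast; ring
    rwa [e] at h
  have b2 : c * u ^ 3 ≤ u ^ (β + 1) := by
    have h := hgen 3 (by norm_num)
    have e : β - 2 + ((3:ℕ):ℝ) = β + 1 := by push_cast; ring
    rwa [e] at h
  have b4 : c * u ≤ u ^ (β - 1) := by
    have h := hgen 1 (by norm_num)
    have e : β - 2 + ((1:ℕ):ℝ) = β - 1 := by push_cast; ring
    rw [e] at h
    simpa using h
  have hββ2 : u ^ β * u ^ 2 = u ^ (β + 2) := by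
    rcases hu.eq_or_lt with h0 | h0
    · rw [← h0, Real.zero_rpow (by linarith : β ≠ 0),
        Real.zero_rpow (by linarith : β + 2 ≠ 0)]
      ring
    · rw [← Real.rpow_natCast u 2, ← Real.rpow_add h0]
      norm_num
  have b1 : u ^ (β + 2) - ε * u ^ β ≤ c * u ^ 4 := by
    have hkey2 : c * (ε + u ^ 2) * u ^ 2 = (ε + u ^ 2) ^ (β / 2) * u ^ 2 := by rw [hkey]
    have hA2 : u ^ β * u ^ 2 ≤ (ε + u ^ 2) ^ (β / 2) * u ^ 2 :=
      mul_le_mul_of_nonneg_right hAβ (by positivity)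
    have hB2 : c * u ^ 2 * ε ≤ u ^ β * ε :=
      mul_le_mul_of_nonneg_right hu2β hε.le
    nlinarith [hkey2, hA2, hB2, hββ2]
  have hcε : c ≤ ε ^ ((β - 2) / 2) := by
    rw [hc]
    exact Real.rpow_le_rpow_of_nonpos hε (by linarith [sq_nonneg u]) (by linarith)
  have hεε : ε ^ ((β - 2) / 2) * ε = ε ^ (β / 2) := by
    have e : β / 2 = (β - 2) / 2 + 1 := by ring
    rw [e, Real.rpow_add_one hε.ne']
  have b3 : u ^ β - ε ^ (β / 2) ≤ c * u ^ 2 := by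
    have hB : c * ε ≤ ε ^ ((β - 2) / 2) * ε :=
      mul_le_mul_of_nonneg_right hcε hε.le
    nlinarith [hkey, hAβ, hB, hεε]
  have h1 : lam * β * (u ^ (β + 2) - ε * u ^ β) ≤ lam * β * (c * u ^ 4) :=
    mul_le_mul_of_nonneg_left b1 (by positivity)
  have h2 : (3 / 2) * (lam * β * D) * (c * u ^ 3) ≤ (3 / 2) * (lam * β * D) * u ^ (β + 1) :=
    mul_le_mul_of_nonneg_left b2 (by positivity)
  have h3 : (lam * β * ((1 / 2) * D ^ 2 + r)) * (u ^ β - ε ^ (β / 2))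
      ≤ (lam * β * ((1 / 2) * D ^ 2 + r)) * (c * u ^ 2) :=
    mul_le_mul_of_nonneg_left b3 (by positivity)
  have h4 : (lam * β * r * M) * (c * u) ≤ (lam * β * r * M) * u ^ (β - 1) :=
    mul_le_mul_of_nonneg_left b4 (by positivity)
  nlinarith [h1, h2, h3, h4]

private theorem key_aux {d : ℕ} (lam kap ε β : ℝ)
    (hlam : 0 < lam) (hkap : 0 < kap) (hε : 0 < ε) (hβ1 : 1 < β) (hβ2 : β < 2)
    (y y' : EuclideanSpace ℝ (Fin d))
    (μ : Measure (EuclideanSpace ℝ (Fin d))) [IsProbabilityMeasure μ]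
    (hμ : Integrable (fun z => ‖z‖) μ) (x : EuclideanSpace ℝ (Fin d)) :
    β * (ε + ‖x - y‖ ^ 2) ^ ((β - 2) / 2) *
      ⟪x - y, -((lam / 2) • (‖x - y'‖ ^ 2 • (x - y) + ‖x - y‖ ^ 2 • (x - y')))
        - kap • (x - ∫ z, z ∂μ)⟫
      ≤ -(lam * β) * (‖x - y‖ ^ (β + 2)
          - (3 / 2) * ‖x - y‖ ^ (β + 1) * ‖y - y'‖
          + ((1 / 2) * ‖y - y'‖ ^ 2 + kap / lam - ε) * ‖x - y‖ ^ β
          - ((1 / 2) * ‖y - y'‖ ^ 2 + kap / lam) * ε ^ (β / 2)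
          - (kap / lam) * ‖x - y‖ ^ (β - 1) * ∫ z, ‖z - y‖ ∂μ) := by
  have hkr : kap = lam * (kap / lam) := by field_simp
  have hu : (0:ℝ) ≤ ‖x - y‖ := norm_nonneg _
  have hD : (0:ℝ) ≤ ‖y - y'‖ := norm_nonneg _
  have hM : (0:ℝ) ≤ ∫ z, ‖z - y‖ ∂μ := integral_nonneg fun z => norm_nonneg _
  have hrpos : 0 < kap / lam := div_pos hkap hlam
  have hεu : (0:ℝ) < ε + ‖x - y‖ ^ 2 := by positivity
  -- inner product computation
  have e1 : ⟪x - y, x - ∫ z, z ∂μ⟫ = ‖x - y‖ ^ 2 - ⟪x - y, (∫ z, z ∂μ) - y⟫ := by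
    have h : x - ∫ z, z ∂μ = (x - y) - ((∫ z, z ∂μ) - y) := by abel
    rw [h, inner_sub_right, real_inner_self_eq_norm_sq]
  have e2 : ⟪x - y, x - y'⟫ = ‖x - y‖ ^ 2 + ⟪x - y, y - y'⟫ := by
    have h : x - y' = (x - y) + (y - y') := by abel
    rw [h, inner_add_right, real_inner_self_eq_norm_sq]
  have e3 : ‖x - y'‖ ^ 2 = ‖x - y‖ ^ 2 + 2 * ⟪x - y, y - y'⟫ + ‖y - y'‖ ^ 2 := by
    have h : x - y' = (x - y) + (y - y') := by abel
    rw [h, norm_add_sq_real]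
  have hinner : ⟪x - y, -((lam / 2) • (‖x - y'‖ ^ 2 • (x - y) + ‖x - y‖ ^ 2 • (x - y')))
        - kap • (x - ∫ z, z ∂μ)⟫
      = -(lam / 2) * ((‖x - y‖ ^ 2 + 2 * ⟪x - y, y - y'⟫ + ‖y - y'‖ ^ 2) * ‖x - y‖ ^ 2
          + ‖x - y‖ ^ 2 * (‖x - y‖ ^ 2 + ⟪x - y, y - y'⟫))
        - lam * (kap / lam) * (‖x - y‖ ^ 2 - ⟪x - y, (∫ z, z ∂μ) - y⟫) := by
    rw [inner_sub_right, inner_neg_right, real_inner_smul_right, inner_add_right,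
      real_inner_smul_right, real_inner_smul_right, real_inner_smul_right, e1, e2, e3,
      real_inner_self_eq_norm_sq, ← hkr]
    ring
  -- Cauchy–Schwarz type bounds
  have cs1 : -(‖x - y‖ * ‖y - y'‖) ≤ ⟪x - y, y - y'⟫ := by
    have h := abs_real_inner_le_norm (x - y) (y - y')
    have h' := neg_abs_le ⟪x - y, y - y'⟫
    linarith
  have hmy : ‖(∫ z, z ∂μ) - y‖ ≤ ∫ z, ‖z - y‖ ∂μ := by
    have hid : Integrable (fun z : EuclideanSpace ℝ (Fin d) => z) μ :=
      (integrable_norm_iff aestronglyMeasurable_id).mp hμ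
    have hsub : (∫ z, z ∂μ) - y = ∫ z, (z - y) ∂μ := by
      rw [integral_sub hid (integrable_const y), integral_const]
      simp
    rw [hsub]
    exact norm_integral_le_integral_norm _
  have cs2 : ⟪x - y, (∫ z, z ∂μ) - y⟫ ≤ ‖x - y‖ * ∫ z, ‖z - y‖ ∂μ := by
    calc ⟪x - y, (∫ z, z ∂μ) - y⟫ ≤ ‖x - y‖ * ‖(∫ z, z ∂μ) - y‖ := real_inner_le_norm _ _
      _ ≤ ‖x - y‖ * ∫ z, ‖z - y‖ ∂μ := mul_le_mul_of_nonneg_left hmy hu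
  -- step 1: pointwise bound on the inner product
  have step1 : ⟪x - y, -((lam / 2) • (‖x - y'‖ ^ 2 • (x - y) + ‖x - y‖ ^ 2 • (x - y')))
        - kap • (x - ∫ z, z ∂μ)⟫
      ≤ -lam * ‖x - y‖ ^ 4 + (3 / 2) * lam * ‖x - y‖ ^ 3 * ‖y - y'‖
        - (lam / 2) * ‖y - y'‖ ^ 2 * ‖x - y‖ ^ 2
        - lam * (kap / lam) * ‖x - y‖ ^ 2
        + lam * (kap / lam) * ‖x - y‖ * ∫ z, ‖z - y‖ ∂μ := by
    rw [hinner]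
    have h1 : (3 / 2) * lam * ‖x - y‖ ^ 2 * (-(‖x - y‖ * ‖y - y'‖))
        ≤ (3 / 2) * lam * ‖x - y‖ ^ 2 * ⟪x - y, y - y'⟫ :=
      mul_le_mul_of_nonneg_left cs1 (by positivity)
    have h2 : lam * (kap / lam) * ⟪x - y, (∫ z, z ∂μ) - y⟫
        ≤ lam * (kap / lam) * (‖x - y‖ * ∫ z, ‖z - y‖ ∂μ) :=
      mul_le_mul_of_nonneg_left cs2 (by positivity)
    nlinarith [h1, h2]
  have hmul : β * (ε + ‖x - y‖ ^ 2) ^ ((β - 2) / 2) *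
        ⟪x - y, -((lam / 2) • (‖x - y'‖ ^ 2 • (x - y) + ‖x - y‖ ^ 2 • (x - y')))
          - kap • (x - ∫ z, z ∂μ)⟫
      ≤ β * (ε + ‖x - y‖ ^ 2) ^ ((β - 2) / 2) *
        (-lam * ‖x - y‖ ^ 4 + (3 / 2) * lam * ‖x - y‖ ^ 3 * ‖y - y'‖
          - (lam / 2) * ‖y - y'‖ ^ 2 * ‖x - y‖ ^ 2
          - lam * (kap / lam) * ‖x - y‖ ^ 2
          + lam * (kap / lam) * ‖x - y‖ * ∫ z, ‖z - y‖ ∂μ) :=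
    mul_le_mul_of_nonneg_left step1 (by positivity)
  exact hmul.trans (real_ineq lam (kap / lam) ε β ‖x - y‖ ‖y - y'‖ (∫ z, ‖z - y‖ ∂μ)
    hlam hrpos hε hβ1 hβ2 hu hD hM)

/-- Pointwise locally dissipative estimate (step (c), inequality (WQ)) for the
symmetric double-well McKean–Vlasov drift. -/
theorem stmt5 {d : ℕ} (hd : 1 ≤ d) (lam kap ε β : ℝ)
    (hlam : 0 < lam) (hkap : 0 < kap) (hε : 0 < ε) (hβ1 : 1 < β) (hβ2 : β < 2)
    (y₁ y₂ : EuclideanSpace ℝ (Fin d))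
    (μ : Measure (EuclideanSpace ℝ (Fin d))) [IsProbabilityMeasure μ]
    (hμ : Integrable (fun z => ‖z‖) μ)
    (b : EuclideanSpace ℝ (Fin d) → EuclideanSpace ℝ (Fin d))
    (hb : ∀ x, b x = -((lam / 2) • (‖x - y₂‖ ^ 2 • (x - y₁) + ‖x - y₁‖ ^ 2 • (x - y₂)))
        - kap • (x - ∫ z, z ∂μ)) :
    ∀ y ∈ ({y₁, y₂} : Set (EuclideanSpace ℝ (Fin d))), ∀ x : EuclideanSpace ℝ (Fin d),
      β * (ε + ‖x - y‖ ^ 2) ^ ((β - 2) / 2) * ⟪x - y, b x⟫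
        ≤ -(lam * β) * (‖x - y‖ ^ (β + 2)
            - (3 / 2) * ‖x - y‖ ^ (β + 1) * ‖y₁ - y₂‖
            + ((1 / 2) * ‖y₁ - y₂‖ ^ 2 + kap / lam - ε) * ‖x - y‖ ^ β
            - ((1 / 2) * ‖y₁ - y₂‖ ^ 2 + kap / lam) * ε ^ (β / 2)
            - (kap / lam) * ‖x - y‖ ^ (β - 1) * ∫ z, ‖z - y‖ ∂μ) := by
  intro y hy x
  simp only [Set.mem_insert_iff, Set.mem_singleton_iff] at hy
  rcases hy with rfl | rfl
  · rw [hb x]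
    exact key_aux lam kap ε β hlam hkap hε hβ1 hβ2 y y₂ μ hμ x
  · rw [hb x, show ‖x - y‖ ^ 2 • (x - y₁) + ‖x - y₁‖ ^ 2 • (x - y)
        = ‖x - y₁‖ ^ 2 • (x - y) + ‖x - y‖ ^ 2 • (x - y₁) from add_comm _ _,
      show ‖y₁ - y‖ = ‖y - y₁‖ from norm_sub_rev _ _]
    exact key_aux lam kap ε β hlam hkap hε hβ1 hβ2 y y₁ μ hμ x
end

section
/- Let d ≥ 1, λ, κ > 0 and y₁, y₂ ∈ ℝ^d. For a probability measure μ on ℝ^d with finite first moment, define b(x, μ) := −(λ/2)((x − y₁)|x − y₂|² + (x − y₂)|x − y₁|²) − κ (x − ∫_{ℝ^d} z μ(dz)). Then there exists a constant C₁ > 0 (depending only on λ, κ, y₁, y₂) such that for all x, y ∈ ℝ^d and all such μ, ⟨x − y, b(x, μ) − b(y, μ)⟩ ≤ C₁ |x − y|². -/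
open Real MeasureTheory
open scoped RealInnerProductSpace

private lemma aux_mono {E : Type*} [NormedAddCommGroup E] [InnerProductSpace ℝ E]
    (u v : E) : 0 ≤ ⟪u - v, ‖u‖ ^ 2 • u - ‖v‖ ^ 2 • v⟫ := by
  have h := real_inner_le_norm u v
  have hcomm := real_inner_comm u v
  simp only [inner_sub_left, inner_sub_right, inner_smul_right,
    real_inner_self_eq_norm_sq]
  nlinarith [mul_nonneg (sq_nonneg (‖u‖ - ‖v‖))
      (by positivity : (0:ℝ) ≤ ‖u‖ ^ 2 + ‖u‖ * ‖v‖ + ‖v‖ ^ 2),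
    sq_nonneg (‖u‖ - ‖v‖), sq_nonneg (‖u‖ + ‖v‖), norm_nonneg u, norm_nonneg v]

private lemma aux_key {E : Type*} [NormedAddCommGroup E] [InnerProductSpace ℝ E]
    (u v a : E) :
    -(4 * ‖a‖ ^ 2 * ‖u - v‖ ^ 2) ≤
      ⟪u - v, (‖u + a‖ ^ 2 • (u - a) + ‖u - a‖ ^ 2 • (u + a))
        - (‖v + a‖ ^ 2 • (v - a) + ‖v - a‖ ^ 2 • (v + a))⟫ := by
  have hf : ∀ w : E, ‖w + a‖ ^ 2 • (w - a) + ‖w - a‖ ^ 2 • (w + a)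
      = (2 * (‖w‖ ^ 2 + ‖a‖ ^ 2)) • w - (4 * ⟪w, a⟫) • a := by
    intro w
    rw [norm_add_sq_real, norm_sub_sq_real]
    module
  rw [hf u, hf v]
  have h2 : ⟪u - v, a⟫ ^ 2 ≤ ‖u - v‖ ^ 2 * ‖a‖ ^ 2 := by
    have h := real_inner_mul_inner_self_le (u - v) a
    rw [real_inner_self_eq_norm_sq, real_inner_self_eq_norm_sq] at h
    nlinarith [h]
  have h1 := aux_mono u v
  have hid : ⟪u - v, ((2 * (‖u‖ ^ 2 + ‖a‖ ^ 2)) • u - (4 * ⟪u, a⟫) • a)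
      - ((2 * (‖v‖ ^ 2 + ‖a‖ ^ 2)) • v - (4 * ⟪v, a⟫) • a)⟫
      = 2 * ⟪u - v, ‖u‖ ^ 2 • u - ‖v‖ ^ 2 • v⟫ + 2 * ‖a‖ ^ 2 * ‖u - v‖ ^ 2
        - 4 * ⟪u - v, a⟫ ^ 2 := by
    simp only [inner_sub_left, inner_sub_right, inner_smul_right,
      real_inner_self_eq_norm_sq, norm_sub_sq_real]
    ring_nf
    rw [real_inner_comm v u]
    ring
  rw [hid]
  nlinarith [sq_nonneg ‖u - v‖, sq_nonneg ‖a‖]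

set_option maxHeartbeats 1000000 in
/-- One-sided Lipschitz estimate (step (b) of Example 1.5) for the drift of the
symmetric double-well McKean–Vlasov SDE. -/
theorem stmt13 {d : ℕ} (hd : 1 ≤ d) (lam kap : ℝ) (hlam : 0 < lam) (hkap : 0 < kap)
    (y₁ y₂ : EuclideanSpace ℝ (Fin d))
    (b : EuclideanSpace ℝ (Fin d) → Measure (EuclideanSpace ℝ (Fin d))
        → EuclideanSpace ℝ (Fin d))
    (hb : ∀ x μ, b x μ
        = -((lam / 2) • (‖x - y₂‖ ^ 2 • (x - y₁) + ‖x - y₁‖ ^ 2 • (x - y₂)))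
          - kap • (x - ∫ z, z ∂μ)) :
    ∃ C₁ > (0 : ℝ), ∀ (x y : EuclideanSpace ℝ (Fin d))
      (μ : Measure (EuclideanSpace ℝ (Fin d))), IsProbabilityMeasure μ →
        Integrable (fun z => ‖z‖) μ →
          ⟪x - y, b x μ - b y μ⟫ ≤ C₁ * ‖x - y‖ ^ 2 := by
  have hC : (0:ℝ) < 2 * lam * ‖y₁ - y₂‖ ^ 2 + 1 := by positivity
  refine ⟨2 * lam * ‖y₁ - y₂‖ ^ 2 + 1, hC, ?_⟩
  intro x y μ _ _
  rw [hb, hb]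
  set a : EuclideanSpace ℝ (Fin d) := (2:ℝ)⁻¹ • (y₁ - y₂) with ha
  set m : EuclideanSpace ℝ (Fin d) := (2:ℝ)⁻¹ • (y₁ + y₂) with hm
  have hx1 : x - y₁ = (x - m) - a := by rw [ha, hm]; module
  have hx2 : x - y₂ = (x - m) + a := by rw [ha, hm]; module
  have hy1 : y - y₁ = (y - m) - a := by rw [ha, hm]; module
  have hy2 : y - y₂ = (y - m) + a := by rw [ha, hm]; module
  set u : EuclideanSpace ℝ (Fin d) := x - m with hu
  set v : EuclideanSpace ℝ (Fin d) := y - m with hv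
  have huv : x - y = u - v := by rw [hu, hv]; abel
  have hdiff : (-((lam / 2) • (‖x - y₂‖ ^ 2 • (x - y₁) + ‖x - y₁‖ ^ 2 • (x - y₂)))
        - kap • (x - ∫ z, z ∂μ))
      - (-((lam / 2) • (‖y - y₂‖ ^ 2 • (y - y₁) + ‖y - y₁‖ ^ 2 • (y - y₂)))
        - kap • (y - ∫ z, z ∂μ))
      = (-(lam / 2)) • ((‖u + a‖ ^ 2 • (u - a) + ‖u - a‖ ^ 2 • (u + a))
          - (‖v + a‖ ^ 2 • (v - a) + ‖v - a‖ ^ 2 • (v + a)))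
        + (-kap) • (u - v) := by
    rw [hx1, hx2, hy1, hy2, ← huv]
    module
  rw [huv, hdiff, inner_add_right, inner_smul_right, inner_smul_right,
    real_inner_self_eq_norm_sq]
  have key := aux_key u v a
  have hna : ‖a‖ ≤ ‖y₁ - y₂‖ := by
    rw [ha, norm_smul]
    have h0 := norm_nonneg (y₁ - y₂)
    simp only [norm_inv, Real.norm_ofNat]
    nlinarith
  have hna2 : ‖a‖ ^ 2 ≤ ‖y₁ - y₂‖ ^ 2 := by
    nlinarith [norm_nonneg a]
  nlinarith [sq_nonneg ‖u - v‖, mul_le_mul_of_nonneg_left hna2 (le_of_lt hlam),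
    mul_nonneg hkap.le (sq_nonneg ‖u - v‖)]
end

section
/- Let β ∈ (1, 2), λ, κ > 0, a₁, a₂ ∈ ℝ, r₂ ≥ 0 and c₀, c₁ ≥ 0. Assume the discriminant condition ((a₁(a₁ − a₂) + κ/λ − 1) · β(β − 1)) / ((2 + β)(1 + β)) ≥ (β² (2a₁ − a₂)²) / (4 (2 + β)²). Then the function g(r) := λβ r^β (r² − |2a₁ − a₂| r + a₁(a₁ − a₂) + κ/λ − 1) − κβ r^{β−1} r₂ − c₁ r^{β/2} − c₀ is convex on (0, ∞). -/
/-!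
On `(0, ∞)` the second derivative of `r ^ p * (a r² + b r + c)` is
`r ^ (p - 2) * ((p + 2)(p + 1) a r² + (p + 1) p b r + p (p - 1) c)`, so the leading term of `g`
is convex as soon as this quadratic in `r` has nonpositive discriminant, which is the stated
condition. The remaining terms are negatives of the concave powers `r ^ (β - 1)` and
`r ^ (β / 2)`, whose exponents lie in `[0, 1]` because `β ∈ (1, 2)`.
-/

open Real Set

lemma quadratic_nonneg_of_sq_le {a b c : ℝ} (ha : 0 < a) (hdisc : b ^ 2 ≤ 4 * a * c) (x : ℝ) :
    0 ≤ a * x ^ 2 + b * x + c := by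
  have key : 4 * a * (a * x ^ 2 + b * x + c) = (2 * a * x + b) ^ 2 + (4 * a * c - b ^ 2) := by
    ring
  nlinarith [sq_nonneg (2 * a * x + b)]

lemma hasDerivAt_rpow_mul_quadratic (p a b c : ℝ) {x : ℝ} (hx : 0 < x) :
    HasDerivAt (fun r => r ^ p * (a * r ^ 2 + b * r + c))
      (x ^ (p - 1) * ((p + 2) * a * x ^ 2 + (p + 1) * b * x + p * c)) x := by
  have hpow := hasDerivAt_rpow_const (p := p) (Or.inl hx.ne')
  have hquad : HasDerivAt (fun r => a * r ^ 2 + b * r + c) (a * (2 * x) + b) x := by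
    simpa using (((hasDerivAt_pow 2 x).const_mul a).add ((hasDerivAt_id x).const_mul b)).add_const c
  refine (hpow.mul hquad).congr_deriv ?_
  have hsplit : x ^ p = x ^ (p - 1) * x := by rw [← rpow_add_one hx.ne', sub_add_cancel]
  rw [hsplit]
  ring

lemma convexOn_rpow_mul_quadratic {p a b c : ℝ}
    (h : ∀ x > 0, 0 ≤ (p + 1) * (p + 2) * a * x ^ 2 + p * (p + 1) * b * x + (p - 1) * p * c) :
    ConvexOn ℝ (Ioi 0) (fun r => r ^ p * (a * r ^ 2 + b * r + c)) := by
  refine convexOn_of_hasDerivWithinAt2_nonneg (convex_Ioi 0)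
    (fun x hx => (hasDerivAt_rpow_mul_quadratic p a b c hx).continuousAt.continuousWithinAt)
    (by simpa using fun x hx => (hasDerivAt_rpow_mul_quadratic p a b c hx).hasDerivWithinAt)
    (by simpa using fun x hx => (hasDerivAt_rpow_mul_quadratic (p - 1) _ _ _ hx).hasDerivWithinAt)
    ?_
  rw [interior_Ioi]
  intro x hx
  exact mul_nonneg (rpow_nonneg hx.le _) ((h x hx).trans_eq (by ring))

lemma convexOn_neg_rpow {p : ℝ} (hp₀ : 0 ≤ p) (hp₁ : p ≤ 1) :
    ConvexOn ℝ (Ioi 0) (fun r : ℝ => -r ^ p) :=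
  ((concaveOn_rpow hp₀ hp₁).subset Ioi_subset_Ici_self (convex_Ioi 0)).neg

theorem stmt16_general (β lam kap a₁ a₂ r₂ c₀ c₁ : ℝ)
    (hβ1 : 1 < β) (hβ2 : β < 2) (hlam : 0 < lam) (hkap : 0 < kap)
    (hr₂ : 0 ≤ r₂) (hc₁ : 0 ≤ c₁)
    (hdisc : β ^ 2 * (2 * a₁ - a₂) ^ 2 / (4 * (2 + β) ^ 2)
      ≤ (a₁ * (a₁ - a₂) + kap / lam - 1) * (β * (β - 1)) / ((2 + β) * (1 + β))) :
    ConvexOn ℝ (Set.Ioi (0 : ℝ))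
      (fun r : ℝ => lam * β * r ^ β * (r ^ 2 - |2 * a₁ - a₂| * r
          + a₁ * (a₁ - a₂) + kap / lam - 1)
        - kap * β * r ^ (β - 1) * r₂ - c₁ * r ^ (β / 2) - c₀) := by
  set M := |2 * a₁ - a₂|
  set K := a₁ * (a₁ - a₂) + kap / lam - 1
  have hdisc' : (-(β * (β + 1) * M)) ^ 2 ≤ 4 * ((β + 1) * (β + 2)) * ((β - 1) * β * K) := by
    rw [div_le_div_iff₀ (by positivity) (by positivity), ← sq_abs (2 * a₁ - a₂)] at hdisc
    nlinarith
  have hmain : ConvexOn ℝ (Ioi 0) (fun r => r ^ β * (1 * r ^ 2 + -M * r + K)) :=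
    convexOn_rpow_mul_quadratic fun x _ => by
      simpa [mul_assoc] using quadratic_nonneg_of_sq_le (by positivity) hdisc' x
  have hsum := (((hmain.smul (by positivity : 0 ≤ lam * β)).add
    ((convexOn_neg_rpow (p := β - 1) (by linarith) (by linarith)).smul
      (by positivity : 0 ≤ kap * β * r₂))).add
    ((convexOn_neg_rpow (p := β / 2) (by linarith) (by linarith)).smul hc₁)).add_const (-c₀)
  refine hsum.congr fun r _ => ?_
  simp only [Pi.add_apply, smul_eq_mul, K]
  ring

/-- Convexity of the comparison function `g_{ε,a₁,a₂}(·, r₂)` (computation (WW-) under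
condition (WW*)) in the proof of Example 1.4. -/
theorem stmt16 (β lam kap a₁ a₂ r₂ c₀ c₁ : ℝ)
    (hβ1 : 1 < β) (hβ2 : β < 2) (hlam : 0 < lam) (hkap : 0 < kap)
    (hr₂ : 0 ≤ r₂) (hc₀ : 0 ≤ c₀) (hc₁ : 0 ≤ c₁)
    (hdisc : β ^ 2 * (2 * a₁ - a₂) ^ 2 / (4 * (2 + β) ^ 2)
      ≤ (a₁ * (a₁ - a₂) + kap / lam - 1) * (β * (β - 1)) / ((2 + β) * (1 + β))) :
    ConvexOn ℝ (Set.Ioi (0 : ℝ))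
      (fun r : ℝ => lam * β * r ^ β * (r ^ 2 - |2 * a₁ - a₂| * r
          + a₁ * (a₁ - a₂) + kap / lam - 1)
        - kap * β * r ^ (β - 1) * r₂ - c₁ * r ^ (β / 2) - c₀) :=
  stmt16_general β lam kap a₁ a₂ r₂ c₀ c₁ hβ1 hβ2 hlam hkap hr₂ hc₁ hdisc
end

section
/- Let β ∈ (1, 2), λ, κ, ε > 0, D ≥ 0, r₂ ≥ 0 and c₀, c₁ ≥ 0. Assume κ/λ ≥ ε + ((β² + β + 16) D²) / (16 (β + 2)(β − 1)). Then the function g(r) := λβ ( r^{β+2} − (3/2) r^{β+1} D + ((1/2) D² + κ/λ − ε) r^β − ((1/2) D² + κ/λ) ε^{β/2} − (κ/λ) r^{β−1} r₂ ) − c₁ r^{β/2} − c₀ is convex on (0, ∞). -/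
open Real

private lemma hasDerivAt_rpow' (p q x : ℝ) (hx : 0 < x) (hpq : q = p - 1) :
    HasDerivAt (fun r : ℝ => r ^ p) (p * x ^ q) x := by
  subst hpq; exact Real.hasDerivAt_rpow_const (Or.inl hx.ne')

private lemma quadle (β D t x : ℝ) (hβ1 : 1 < β) (hβ2 : β < 2) (hD : 0 ≤ D) (hx : 0 < x)
    (ht : (β ^ 2 + β + 16) * D ^ 2 ≤ t * (16 * (β + 2) * (β - 1))) :
    0 ≤ (β + 2) * (β + 1) * x ^ 2 - (3 / 2) * D * (β + 1) * β * x
      + ((1 / 2) * D ^ 2 + t) * β * (β - 1) := by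
  nlinarith [mul_nonneg (by nlinarith : (0:ℝ) ≤ β + 1) (sq_nonneg (4 * (β + 2) * x - 3 * β * D)),
    mul_le_mul_of_nonneg_left ht (by nlinarith : (0:ℝ) ≤ β), sq_nonneg D, sq_nonneg x]

/-- Convexity claim (step (d)) in the proof of Example 1.5: under condition (EQ1) on
`κ/λ`, the comparison function `g` is convex on `(0, ∞)`. -/
theorem stmt18 (β lam kap ε D r₂ c₀ c₁ : ℝ)
    (hβ1 : 1 < β) (hβ2 : β < 2) (hlam : 0 < lam) (hkap : 0 < kap) (hε : 0 < ε)
    (hD : 0 ≤ D) (hr₂ : 0 ≤ r₂) (hc₀ : 0 ≤ c₀) (hc₁ : 0 ≤ c₁)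
    (h : ε + (β ^ 2 + β + 16) * D ^ 2 / (16 * (β + 2) * (β - 1)) ≤ kap / lam) :
    ConvexOn ℝ (Set.Ioi (0 : ℝ))
      (fun r : ℝ => lam * β * (r ^ (β + 2) - (3 / 2) * r ^ (β + 1) * D
          + ((1 / 2) * D ^ 2 + kap / lam - ε) * r ^ β
          - ((1 / 2) * D ^ 2 + kap / lam) * ε ^ (β / 2)
          - (kap / lam) * r ^ (β - 1) * r₂)
        - c₁ * r ^ (β / 2) - c₀) := by
  set q : ℝ := kap / lam with hqdef
  set A : ℝ := (1 / 2) * D ^ 2 + q - ε with hAdef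
  set C : ℝ := ((1 / 2) * D ^ 2 + q) * ε ^ (β / 2) with hCdef
  set f : ℝ → ℝ := fun r : ℝ => lam * β * (r ^ (β + 2) - (3 / 2) * r ^ (β + 1) * D
          + A * r ^ β - C - q * r ^ (β - 1) * r₂) - c₁ * r ^ (β / 2) - c₀ with hfdef
  set F' : ℝ → ℝ := fun x => lam * β * ((β + 2) * x ^ (β + 1)
      - (3 / 2) * ((β + 1) * x ^ β) * D + A * (β * x ^ (β - 1))
      - q * ((β - 1) * x ^ (β - 2)) * r₂) - c₁ * ((β / 2) * x ^ (β / 2 - 1)) with hF'def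
  set F'' : ℝ → ℝ := fun x => lam * β * ((β + 2) * ((β + 1) * x ^ β)
      - (3 / 2) * ((β + 1) * (β * x ^ (β - 1))) * D + A * (β * ((β - 1) * x ^ (β - 2)))
      - q * ((β - 1) * ((β - 2) * x ^ (β - 3))) * r₂)
      - c₁ * ((β / 2) * ((β / 2 - 1) * x ^ (β / 2 - 2))) with hF''def
  have hf1 : ∀ x ∈ Set.Ioi (0:ℝ), HasDerivAt f (F' x) x := by
    intro x hx
    have hx0 : 0 < x := hx
    have h1 := hasDerivAt_rpow' (β + 2) (β + 1) x hx0 (by ring)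
    have h2 := hasDerivAt_rpow' (β + 1) β x hx0 (by ring)
    have h3 := hasDerivAt_rpow' β (β - 1) x hx0 (by ring)
    have h4 := hasDerivAt_rpow' (β - 1) (β - 2) x hx0 (by ring)
    have h5 := hasDerivAt_rpow' (β / 2) (β / 2 - 1) x hx0 (by ring)
    have s1 := h1
    have s2 := (h2.const_mul (3/2 : ℝ)).mul_const D
    have s3 := h3.const_mul A
    have s4 := (h4.const_mul q).mul_const r₂
    have s5 := h5.const_mul c₁
    exact (((((((s1.sub s2).add s3).sub_const C).sub s4).const_mul (lam * β)).sub s5).sub_const c₀)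
  have hf2 : ∀ x ∈ Set.Ioi (0:ℝ), HasDerivAt F' (F'' x) x := by
    intro x hx
    have hx0 : 0 < x := hx
    have h1 := hasDerivAt_rpow' (β + 1) β x hx0 (by ring)
    have h2 := hasDerivAt_rpow' β (β - 1) x hx0 (by ring)
    have h3 := hasDerivAt_rpow' (β - 1) (β - 2) x hx0 (by ring)
    have h4 := hasDerivAt_rpow' (β - 2) (β - 3) x hx0 (by ring)
    have h5 := hasDerivAt_rpow' (β / 2 - 1) (β / 2 - 2) x hx0 (by ring)
    have s1 := h1.const_mul (β + 2)
    have s2 := ((h2.const_mul (β + 1)).const_mul (3/2 : ℝ)).mul_const D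
    have s3 := (h3.const_mul β).const_mul A
    have s4 := ((h4.const_mul (β - 1)).const_mul q).mul_const r₂
    have s5 := (h5.const_mul (β / 2)).const_mul c₁
    exact ((((s1.sub s2).add s3).sub s4).const_mul (lam * β)).sub s5
  have hEq : Set.EqOn (deriv f) F' (Set.Ioi 0) := fun x hx => (hf1 x hx).deriv
  have hderiv2 : ∀ x ∈ Set.Ioi (0:ℝ), deriv (deriv f) x = F'' x := by
    intro x hx
    have hev : deriv f =ᶠ[nhds x] F' :=
      Filter.eventuallyEq_of_mem (isOpen_Ioi.mem_nhds hx) hEq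
    rw [hev.deriv_eq, (hf2 x hx).deriv]
  clear_value q A C f F' F''
  have hconv : Convex ℝ (Set.Ioi (0:ℝ)) := convex_Ioi 0
  have hint : interior (Set.Ioi (0:ℝ)) = Set.Ioi 0 := isOpen_Ioi.interior_eq
  refine convexOn_of_deriv2_nonneg hconv ?_ ?_ ?_ ?_
  · exact fun x hx => ((hf1 x hx).differentiableAt.continuousAt).continuousWithinAt
  · rw [hint]; exact fun x hx => ((hf1 x hx).differentiableAt).differentiableWithinAt
  · rw [hint]
    intro x hx
    have hev : deriv f =ᶠ[nhds x] F' :=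
      Filter.eventuallyEq_of_mem (isOpen_Ioi.mem_nhds hx) hEq
    exact (((hf2 x hx).differentiableAt).congr_of_eventuallyEq hev).differentiableWithinAt
  · rw [hint]
    intro x hx
    have hx0 : 0 < x := hx
    have h2 : deriv^[2] f x = F'' x := by
      simp only [Function.iterate_succ, Function.iterate_zero, Function.comp_apply, id]
      exact hderiv2 x hx
    rw [h2]
    simp only [hF''def]
    -- rewrite powers
    have hy : (0:ℝ) < x ^ (β - 2) := Real.rpow_pos_of_pos hx0 _
    have e1 : x ^ β = x ^ (β - 2) * x ^ 2 := by
      have h' := Real.rpow_add hx0 (β - 2) 2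
      rw [Real.rpow_two] at h'
      rw [← h']; congr 1; ring
    have e2 : x ^ (β - 1) = x ^ (β - 2) * x := by
      have h' := Real.rpow_add hx0 (β - 2) 1
      rw [Real.rpow_one] at h'
      rw [← h']; congr 1; ring
    have ht : (β ^ 2 + β + 16) * D ^ 2 ≤ (q - ε) * (16 * (β + 2) * (β - 1)) := by
      have hpos : (0:ℝ) < 16 * (β + 2) * (β - 1) := by nlinarith
      have h' : (β ^ 2 + β + 16) * D ^ 2 / (16 * (β + 2) * (β - 1)) ≤ q - ε := by linarith
      exact (div_le_iff₀ hpos).mp h'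
    have hQ := quadle β D (q - ε) x hβ1 hβ2 hD hx0 ht
    have hq0 : 0 < q := by rw [hqdef]; exact div_pos hkap hlam
    have hx3 : (0:ℝ) < x ^ (β - 3) := Real.rpow_pos_of_pos hx0 _
    have hx4 : (0:ℝ) < x ^ (β / 2 - 2) := Real.rpow_pos_of_pos hx0 _
    have t1 : 0 ≤ lam * β * (x ^ (β - 2) *
        ((β + 2) * (β + 1) * x ^ 2 - (3 / 2) * D * (β + 1) * β * x
          + ((1 / 2) * D ^ 2 + (q - ε)) * β * (β - 1))) :=
      mul_nonneg (mul_nonneg hlam.le (by linarith)) (mul_nonneg hy.le hQ)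
    have t2 : 0 ≤ lam * β * (q * ((β - 1) * ((2 - β) * x ^ (β - 3))) * r₂) := by
      apply mul_nonneg (mul_nonneg hlam.le (by linarith))
      apply mul_nonneg (mul_nonneg hq0.le _) hr₂
      exact mul_nonneg (by linarith) (mul_nonneg (by linarith) hx3.le)
    have t3 : 0 ≤ c₁ * ((β / 2) * ((1 - β / 2) * x ^ (β / 2 - 2))) := by
      apply mul_nonneg hc₁
      apply mul_nonneg (by linarith)
      exact mul_nonneg (by linarith) hx4.le
    have hA' : A = (1 / 2) * D ^ 2 + (q - ε) := by rw [hAdef]; ring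
    rw [e1, e2, hA']
    linarith [t1, t2, t3]
end
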